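/- Let T be a finite tree of order n ≥ 2 with a vertex v. Then d_T^T Q_{T,v} d_T ≥ n − 1, with equality if and only if v is adjacent in T to every other vertex (i.e., for n = 2, T is the path P_2, and for n ≥ 3, T is the star S_n with centre v). -/

import Mathlib

open SimpleGraph Filter

namespace Braess

universe u

variable {V : Type*}

/-- The number of spanning trees of `G`. -/
noncomputable def tau (G : SimpleGraph V) : ℕ :=
  Nat.card {H : SimpleGraph V // H ≤ G ∧ H.IsTree}

/-- `H` is a 2-forest (spanning forest with exactly two components) of `G`. -/
def IsTwoForest (G H : SimpleGraph V) : Prop :=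
  H ≤ G ∧ H.IsAcyclic ∧ Nat.card H.ConnectedComponent = 2

/-- `f_G(i,j)`: the number of 2-forests of `G` with `i` and `j` in different components. -/
noncomputable def fsep (G : SimpleGraph V) (i j : V) : ℕ :=
  Nat.card {H : SimpleGraph V // IsTwoForest G H ∧ ¬ H.Reachable i j}

/-- `q_{i,j}`: the number of 2-forests of `G` with `i` and `j` in one component and `v`
in the other. -/
noncomputable def qEntry (G : SimpleGraph V) (v i j : V) : ℕ :=
  Nat.card {H : SimpleGraph V // IsTwoForest G H ∧ H.Reachable i j ∧ ¬ H.Reachable i v}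

/-- Degree of a vertex. -/
noncomputable def deg (G : SimpleGraph V) (i : V) : ℕ :=
  Nat.card (G.neighborSet i)

/-- Number of edges of `G`. -/
noncomputable def edgeCount (G : SimpleGraph V) : ℕ :=
  Nat.card G.edgeSet

/-- `d_G^T F_G d_G`. -/
noncomputable def dFd (G : SimpleGraph V) : ℚ :=
  ∑ᶠ i, ∑ᶠ j, (deg G i : ℚ) * (fsep G i j : ℚ) * (deg G j : ℚ)

/-- `d_G^T f^v_G`. -/
noncomputable def dfv (G : SimpleGraph V) (v : V) : ℚ :=
  ∑ᶠ i, (deg G i : ℚ) * (fsep G i v : ℚ)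

/-- `d_G^T Q_{G,v} d_G`. -/
noncomputable def dQd (G : SimpleGraph V) (v : V) : ℚ :=
  ∑ᶠ i, ∑ᶠ j, (deg G i : ℚ) * (qEntry G v i j : ℚ) * (deg G j : ℚ)

/-- `φ_G(v) = d_G^T (2 f^v_G 𝟙^T − F_G) d_G`. -/
noncomputable def phi (G : SimpleGraph V) (v : V) : ℚ :=
  ∑ᶠ i, ∑ᶠ j, (deg G i : ℚ) * (2 * (fsep G i v : ℚ) - (fsep G i j : ℚ)) * (deg G j : ℚ)

/-- Kemeny's constant, via the combinatorial formula. -/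
noncomputable def kemeny (G : SimpleGraph V) : ℚ :=
  dFd G / (4 * (edgeCount G : ℚ) * (tau G : ℚ))

/-- Eccentricity of a vertex. -/
noncomputable def ecc (G : SimpleGraph V) (v : V) : ℕ :=
  sSup (Set.range (G.dist v))

/-- The graph `G̃(v,k₁,k₂)`, obtained from `G` by attaching at `v` two pendent paths
with `k₁` and `k₂` new vertices respectively. -/
def attach (G : SimpleGraph V) (v : V) (k₁ k₂ : ℕ) :
    SimpleGraph (V ⊕ (Fin k₁ ⊕ Fin k₂)) where
  Adj x y :=
    match x, y with
    | .inl a, .inl b => G.Adj a b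
    | .inl a, .inr (.inl i) => a = v ∧ (i : ℕ) = 0
    | .inl a, .inr (.inr i) => a = v ∧ (i : ℕ) = 0
    | .inr (.inl i), .inl b => b = v ∧ (i : ℕ) = 0
    | .inr (.inr i), .inl b => b = v ∧ (i : ℕ) = 0
    | .inr (.inl i), .inr (.inl j) => (i : ℕ) + 1 = (j : ℕ) ∨ (j : ℕ) + 1 = (i : ℕ)
    | .inr (.inr i), .inr (.inr j) => (i : ℕ) + 1 = (j : ℕ) ∨ (j : ℕ) + 1 = (i : ℕ)
    | .inr (.inl _), .inr (.inr _) => False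
    | .inr (.inr _), .inr (.inl _) => False
  symm := by
    constructor
    rintro (a | (i | i)) (b | (j | j)) h
    · exact G.symm.symm _ _ h
    · exact h
    · exact h
    · exact h
    · exact h.symm
    · exact h.elim
    · exact h
    · exact h.elim
    · exact h.symm
  loopless := by
    constructor
    rintro (a | (i | i)) h
    · exact G.loopless.irrefl a h
    · omega
    · omega

/-- The far endpoint of the first attached path (it is `v` itself when `k₁ = 0`). -/
def farEnd₁ (v : V) (k₁ k₂ : ℕ) : V ⊕ (Fin k₁ ⊕ Fin k₂) :=
  if h : 0 < k₁ then .inr (.inl ⟨k₁ - 1, by omega⟩) else .inl v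

/-- The far endpoint of the second attached path (it is `v` itself when `k₂ = 0`). -/
def farEnd₂ (v : V) (k₁ k₂ : ℕ) : V ⊕ (Fin k₁ ⊕ Fin k₂) :=
  if h : 0 < k₂ then .inr (.inr ⟨k₂ - 1, by omega⟩) else .inl v

/-- The graph `Ĝ(v,k₁,k₂)`: `G̃(v,k₁,k₂)` together with the extra edge joining the far
endpoints of the two attached paths. -/
def attachEdge (G : SimpleGraph V) (v : V) (k₁ k₂ : ℕ) :
    SimpleGraph (V ⊕ (Fin k₁ ⊕ Fin k₂)) :=
  attach G v k₁ k₂ ⊔ fromEdgeSet {s(farEnd₁ v k₁ k₂, farEnd₂ v k₁ k₂)}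

/-- `G` is `(v,k₁,k₂)`-paradoxical. -/
def IsParadoxical (G : SimpleGraph V) (v : V) (k₁ k₂ : ℕ) : Prop :=
  kemeny (attach G v k₁ k₂) < kemeny (attachEdge G v k₁ k₂)

/-- `φ₁(k₁,k₂)`. -/
noncomputable def kphi₁ (k₁ k₂ : ℕ) : ℚ :=
  -(2 / 3) * ((k₁ : ℚ) + k₂) * ((k₁ : ℚ) + k₂ - 1) + 2 * k₁ * k₂

/-- `φ₂(k₁,k₂)`. -/
noncomputable def kphi₂ (k₁ k₂ : ℕ) : ℚ :=
  -((k₁ : ℚ) + k₂) * (5 * ((k₁ : ℚ) + k₂) ^ 2 - ((k₁ : ℚ) + k₂) - 1)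
    + 12 * k₁ * k₂ * ((k₁ : ℚ) + k₂ + 1)

/-- `φ₃(k₁,k₂)`. -/
noncomputable def kphi₃ (k₁ k₂ : ℕ) : ℚ :=
  -((k₁ : ℚ) + k₂ + 1) * ((k₁ : ℚ) + k₂) * ((k₁ : ℚ) + k₂ - 1) ^ 2

/-- `Φ_G(v,k₁,k₂)`, with `k = k₁ + k₂ + 1`. -/
noncomputable def Phi (G : SimpleGraph V) (v : V) (k₁ k₂ : ℕ) : ℚ :=
  ((k₁ : ℚ) + k₂ + 1) * phi G v
    + 4 * (edgeCount G : ℚ) ^ 2 * (tau G : ℚ) * ((k₁ : ℚ) + k₂ + 1) * kphi₁ k₁ k₂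
    + (2 * (edgeCount G : ℚ) * (tau G : ℚ) * ((k₁ : ℚ) + k₂ + 1) / 3) * kphi₂ k₁ k₂
    + (2 * (tau G : ℚ) * ((k₁ : ℚ) + k₂ + 1) / 3) * kphi₃ k₁ k₂

/-- A sequence of graphs with specified vertices is asymptotically paradoxical. -/
def AsympParadoxical {W : ℕ → Type u} (G : ∀ n, SimpleGraph (W n)) (v : ∀ n, W n) : Prop :=
  ∀ l₁ l₂ : ℕ, 2 ≤ l₁ + l₂ → ∃ N, ∀ n ≥ N, IsParadoxical (G n) (v n) l₁ l₂

section Glue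

variable {V₁ V₂ : Type*}

/-- The graph obtained from `H₁` and `H₂` by identifying `v₁ ∈ V(H₁)` and `v₂ ∈ V(H₂)` as a
single vertex (represented by `Sum.inl v₁`). -/
def glue (H₁ : SimpleGraph V₁) (H₂ : SimpleGraph V₂) (v₁ : V₁) (v₂ : V₂) :
    SimpleGraph (V₁ ⊕ {x : V₂ // x ≠ v₂}) where
  Adj x y :=
    match x, y with
    | .inl a, .inl b => H₁.Adj a b
    | .inl a, .inr b => a = v₁ ∧ H₂.Adj v₂ b.1
    | .inr a, .inl b => b = v₁ ∧ H₂.Adj v₂ a.1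
    | .inr a, .inr b => H₂.Adj a.1 b.1
  symm := by
    constructor
    rintro (a | a) (b | b) h
    · exact H₁.symm.symm _ _ h
    · exact h
    · exact h
    · exact H₂.symm.symm _ _ h
  loopless := by
    constructor
    rintro (a | a) h
    · exact H₁.loopless.irrefl a h
    · exact H₂.loopless.irrefl a.1 h

/-- The canonical map from `V₂` to the vertex set of the glued graph. -/
def glueRight [DecidableEq V₂] (v₁ : V₁) (v₂ : V₂) (x : V₂) : V₁ ⊕ {y : V₂ // y ≠ v₂} :=
  if h : x = v₂ then .inl v₁ else .inr ⟨x, h⟩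

end Glue

section MultiGlue

variable {ι : Type*} {W : ι → Type*} {V₀ : Type*}

/-- The graph obtained from the family `H i` and `G` by identifying all the vertices `w i`
and `v` as a single vertex (represented by `Sum.inl v`). -/
def multiGlue (H : ∀ i, SimpleGraph (W i)) (w : ∀ i, W i)
    (G : SimpleGraph V₀) (v : V₀) :
    SimpleGraph (V₀ ⊕ Σ i, {x : W i // x ≠ w i}) where
  Adj x y :=
    match x, y with
    | .inl a, .inl b => G.Adj a b
    | .inl a, .inr ⟨i, b⟩ => a = v ∧ (H i).Adj (w i) b.1
    | .inr ⟨i, a⟩, .inl b => b = v ∧ (H i).Adj (w i) a.1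
    | .inr ⟨i, a⟩, .inr ⟨j, b⟩ => ∃ h : i = j, (H j).Adj (h ▸ a).1 b.1
  symm := by
    constructor
    rintro (a | ⟨i, a⟩) (b | ⟨j, b⟩) h
    · exact G.symm.symm _ _ h
    · exact h
    · exact h
    · obtain ⟨rfl, h⟩ := h
      exact ⟨rfl, (H i).symm.symm _ _ h⟩
  loopless := by
    constructor
    rintro (a | ⟨i, a⟩) h
    · exact G.loopless.irrefl a h
    · obtain ⟨h', h⟩ := h
      exact (H i).loopless.irrefl a.1 h

end MultiGlue

/-- The broom `𝓑_{n,k}`: a path on the `k` vertices `0, 1, …, k−1` together with `n − k`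
pendent vertices (the vertices `k, …, n−1`) all adjacent to the vertex `0`. -/
def broomGraph (n k : ℕ) : SimpleGraph (Fin n) where
  Adj i j :=
    ((i : ℕ) + 1 = (j : ℕ) ∧ (j : ℕ) < k) ∨ ((j : ℕ) + 1 = (i : ℕ) ∧ (i : ℕ) < k) ∨
      ((i : ℕ) = 0 ∧ k ≤ (j : ℕ) ∧ i ≠ j) ∨ ((j : ℕ) = 0 ∧ k ≤ (i : ℕ) ∧ i ≠ j)
  symm := by
    constructor
    intro i j h
    tauto
  loopless := by
    constructor
    rintro i (⟨h, -⟩ | ⟨h, -⟩ | ⟨-, -, h⟩ | ⟨-, -, h⟩)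
    · omega
    · omega
    · exact h rfl
    · exact h rfl

section Branch

variable (G : SimpleGraph V) (v : V)

/-- The vertex set of the branch of `G` at `v` corresponding to the connected component `c`
of `G − v`. -/
def branchSet (c : (G.induce {x : V | x ≠ v}).ConnectedComponent) : Set V :=
  insert v {x : V | ∃ h : x ≠ v,
    (G.induce {x : V | x ≠ v}).connectedComponentMk ⟨x, h⟩ = c}

/-- The vertex set of the complementary part `G'_c`: everything outside the branch at `c`,
together with `v`. -/
def cobranchSet (c : (G.induce {x : V | x ≠ v}).ConnectedComponent) : Set V :=
  insert v {x : V | ∃ h : x ≠ v,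
    (G.induce {x : V | x ≠ v}).connectedComponentMk ⟨x, h⟩ ≠ c}

end Branch

section Sequence

/-- `Tnew` is obtained from `Told` by adding one new pendent vertex (the last vertex). -/
def AddPendentStep {n : ℕ} (Told : SimpleGraph (Fin (n + 1)))
    (Tnew : SimpleGraph (Fin (n + 2))) : Prop :=
  (∀ a b : Fin (n + 1), Tnew.Adj a.castSucc b.castSucc ↔ Told.Adj a b) ∧
    ∃ u : Fin (n + 1), ∀ x : Fin (n + 1), Tnew.Adj (Fin.last (n + 1)) x.castSucc ↔ x = u

/-- `Tnew` is obtained from `Told` by subdividing one edge, the new (last) vertex being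
placed in the middle of it. -/
def SubdivideStep {n : ℕ} (Told : SimpleGraph (Fin (n + 1)))
    (Tnew : SimpleGraph (Fin (n + 2))) : Prop :=
  ∃ a b : Fin (n + 1), Told.Adj a b ∧
    (∀ x y : Fin (n + 1), Tnew.Adj x.castSucc y.castSucc ↔ (Told.Adj x y ∧ s(x, y) ≠ s(a, b))) ∧
    (∀ x : Fin (n + 1), Tnew.Adj (Fin.last (n + 1)) x.castSucc ↔ (x = a ∨ x = b))

/-- The vertex set of the branch of `T` at the vertex `0` containing the vertex `w`. -/
def branchSetAt {m : ℕ} (T : SimpleGraph (Fin (m + 1))) (w : Fin (m + 1)) :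
    Set (Fin (m + 1)) :=
  insert 0 {y : Fin (m + 1) | ∃ (hy : y ≠ 0) (hw : w ≠ 0),
    (T.induce {z : Fin (m + 1) | z ≠ 0}).Reachable ⟨y, hy⟩ ⟨w, hw⟩}

/-- The eccentricity of the vertex `0` in the branch of `T` at `0` containing `w`. -/
noncomputable def branchEcc {m : ℕ} (T : SimpleGraph (Fin (m + 1))) (w : Fin (m + 1)) : ℕ :=
  ecc (T.induce (branchSetAt T w)) ⟨0, Set.mem_insert _ _⟩

/-- `f = Θ(g)` (big Theta) for `ℕ`-valued sequences. -/
def IsBigTheta (f g : ℕ → ℕ) : Prop :=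
  ∃ c₁ c₂ : ℚ, 0 < c₁ ∧ 0 < c₂ ∧
    ∃ N, ∀ n ≥ N, c₁ * (g n : ℚ) ≤ (f n : ℚ) ∧ (f n : ℚ) ≤ c₂ * (g n : ℚ)

/-- `β_n`: the number of branches of `T n` at the vertex `0` whose eccentricity function (in
later members of the sequence, under the consistent indexing that tracks each branch by the
vertices it contains) is `Θ` of the eccentricity of `0`. -/
noncomputable def beta (T : ∀ n : ℕ, SimpleGraph (Fin (n + 1))) (n : ℕ) : ℕ :=
  Nat.card {c : ((T n).induce {z : Fin (n + 1) | z ≠ 0}).ConnectedComponent //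
    ∃ (x : Fin (n + 1)) (hx : x ≠ 0),
      ((T n).induce {z : Fin (n + 1) | z ≠ 0}).connectedComponentMk ⟨x, hx⟩ = c ∧
      IsBigTheta
        (fun m => if h : n ≤ m then branchEcc (T m) (Fin.castLE (by omega) x) else 0)
        (fun m => ecc (T m) 0)}

end Sequence


/-!
Expanding the quadratic form gives `d_Tᵀ Q_{T,v} d_T = ∑_F d(F)²`, where `F` runs over the
2-forests and `d(F)` is the degree sum of the component of `F` avoiding `v`. The 2-forests of a
tree are exactly the `n - 1` graphs `T - e`, and each `d(T - e) ≥ 1` since the far component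
contains an endpoint of `e`. If every other vertex is adjacent to `v`, each far component is a
single leaf, so every term is `1`. Otherwise, for `w` not adjacent to `v` and `u` the neighbour of
`v` on the path to `w`, both `u` and `w` lie on the far side of `T - uv`, so that term is `≥ 4`.
-/

lemma _root_.SimpleGraph.reachable_of_not_reachable_of_card_eq_two {H : SimpleGraph V}
    (h2 : Nat.card H.ConnectedComponent = 2) {i j v : V}
    (hi : ¬ H.Reachable i v) (hj : ¬ H.Reachable j v) : H.Reachable i j := by
  obtain ⟨a, b, hab, huniv⟩ := Nat.card_eq_two_iff.mp h2
  have hmem : ∀ c : H.ConnectedComponent, c = a ∨ c = b := fun c => by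
    simpa using Set.eq_univ_iff_forall.mp huniv c
  rw [← ConnectedComponent.eq] at hi hj ⊢
  rcases hmem (H.connectedComponentMk i) with h | h <;>
    rcases hmem (H.connectedComponentMk j) with h' | h' <;>
    rcases hmem (H.connectedComponentMk v) with h'' | h'' <;> simp_all

lemma _root_.SimpleGraph.reachable_and_reachable_or_of_card_eq_two {H : SimpleGraph V}
    (h2 : Nat.card H.ConnectedComponent = 2) {a b c d : V}
    (hab : ¬ H.Reachable a b) (hcd : ¬ H.Reachable c d) :
    (H.Reachable c a ∧ H.Reachable d b) ∨ (H.Reachable c b ∧ H.Reachable d a) := by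
  have hba : ¬ H.Reachable b a := fun h => hab h.symm
  by_cases hca : H.Reachable c a
  · exact .inl ⟨hca, reachable_of_not_reachable_of_card_eq_two h2
      (fun hda => hcd (hca.trans hda.symm)) hba⟩
  · have hcb := reachable_of_not_reachable_of_card_eq_two h2 hca hba
    exact .inr ⟨hcb, reachable_of_not_reachable_of_card_eq_two h2
      (fun hdb => hcd (hcb.trans hdb.symm)) hab⟩

lemma _root_.SimpleGraph.exists_adj_not_reachable_of_not_reachable {G H : SimpleGraph V}
    (hG : G.Preconnected) {x y : V} (hxy : ¬ H.Reachable x y) :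
    ∃ a b, G.Adj a b ∧ ¬ H.Reachable a b := by
  obtain ⟨p⟩ := hG x y
  obtain ⟨d, -, hd₁, hd₂⟩ := p.exists_boundary_dart {z | H.Reachable x z} (Reachable.refl x) hxy
  exact ⟨d.fst, d.snd, d.adj, fun h => hd₂ (Reachable.trans hd₁ h)⟩

lemma _root_.SimpleGraph.IsAcyclic.not_adj_of_adj_of_adj {G : SimpleGraph V}
    (hG : G.IsAcyclic) {v x y : V} (hx : G.Adj v x) (hy : G.Adj v y) : ¬ G.Adj x y :=
  fun hxy => by
    classical
    exact hG.cliqueFree le_rfl _ (is3Clique_triple_iff.mpr ⟨hx, hy, hxy⟩)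

lemma _root_.SimpleGraph.deleteEdges_singleton_injOn (G : SimpleGraph V) :
    Set.InjOn (fun e => G.deleteEdges {e}) G.edgeSet := by
  intro e₁ _ e₂ h₂ h
  by_contra hne
  have he₂ : e₂ ∈ (G.deleteEdges {e₁}).edgeSet := by
    rw [edgeSet_deleteEdges]
    exact ⟨h₂, Ne.symm hne⟩
  rw [show G.deleteEdges {e₁} = G.deleteEdges {e₂} from h, edgeSet_deleteEdges] at he₂
  exact he₂.2 rfl

lemma _root_.SimpleGraph.reachable_deleteEdges_or {G : SimpleGraph V} (hG : G.Connected)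
    {x y : V} (hxy : G.Adj x y) (w : V) :
    (G.deleteEdges {s(x, y)}).Reachable w x ∨ (G.deleteEdges {s(x, y)}).Reachable w y := by
  classical
  obtain ⟨P, hP⟩ := hG.exists_isPath w x
  by_cases heP : s(x, y) ∈ P.edges
  · have hyP := P.snd_mem_support_of_mem_edges heP
    have hxP₁ := Walk.endpoint_notMem_support_takeUntil hP hyP hxy.ne
    refine .inr ⟨(P.takeUntil y hyP).toDeleteEdges {s(x, y)} fun e he hex => hxP₁ ?_⟩
    rw [Set.mem_singleton_iff.mp hex] at he
    exact Walk.fst_mem_support_of_mem_edges _ he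
  · exact .inl ⟨P.toDeleteEdges {s(x, y)} fun e he hex => heP (Set.mem_singleton_iff.mp hex ▸ he)⟩

lemma _root_.SimpleGraph.IsTree.not_reachable_deleteEdges {T : SimpleGraph V} (hT : T.IsTree)
    {a b : V} (hab : T.Adj a b) : ¬ (T.deleteEdges {s(a, b)}).Reachable a b :=
  isBridge_iff.mp (isAcyclic_iff_forall_adj_isBridge.mp hT.2 hab)

section TwoForest

open Finset
open scoped Classical

variable [Fintype V]

noncomputable def farSide (H : SimpleGraph V) (v : V) : Finset V :=
  {i | ¬ H.Reachable i v}

@[simp]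
lemma mem_farSide {H : SimpleGraph V} {v i : V} : i ∈ farSide H v ↔ ¬ H.Reachable i v := by
  simp [farSide]

noncomputable def farDegSum (G H : SimpleGraph V) (v : V) : ℕ :=
  ∑ i ∈ farSide H v, deg G i

lemma qEntry_eq_card (G : SimpleGraph V) (v i j : V) :
    qEntry G v i j = #{H | IsTwoForest G H ∧ ¬ H.Reachable i v ∧ ¬ H.Reachable j v} := by
  rw [qEntry, Nat.card_eq_fintype_card, Fintype.card_subtype]
  congr 1
  ext H
  simp only [mem_filter, mem_univ, true_and, and_congr_right_iff]
  intro hH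
  exact ⟨fun ⟨hij, hiv⟩ => ⟨hiv, fun hjv => hiv (hij.trans hjv)⟩,
    fun ⟨hiv, hjv⟩ => ⟨reachable_of_not_reachable_of_card_eq_two hH.2.2 hiv hjv, hiv⟩⟩

lemma dQd_eq_sum_sq_farDegSum (G : SimpleGraph V) (v : V) :
    dQd G v = ∑ H with IsTwoForest G H, (farDegSum G H v : ℚ) ^ 2 := by
  have hS : ∀ H, (farDegSum G H v : ℚ) = ∑ i, if ¬ H.Reachable i v then (deg G i : ℚ) else 0 :=
    fun H => by rw [farDegSum, farSide, Nat.cast_sum, sum_filter]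
  simp only [dQd, finsum_eq_sum_of_fintype, qEntry_eq_card, hS, sq, sum_mul_sum]
  simp_rw [natCast_card_filter, mul_sum, sum_mul, sum_filter]
  rw [sum_congr rfl fun i _ => sum_comm, sum_comm]
  refine sum_congr rfl fun H _ => ?_
  by_cases hH : IsTwoForest G H
  · simp only [hH, true_and, if_true]
    refine sum_congr rfl fun i _ => sum_congr rfl fun j _ => ?_
    split_ifs <;> simp_all
  · simp [hH]

end TwoForest

section Tree

open Finset
open scoped Classical

variable {T H : SimpleGraph V}

lemma isTwoForest_deleteEdges (hT : T.IsTree) {a b : V} (hab : T.Adj a b) :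
    IsTwoForest T (T.deleteEdges {s(a, b)}) := by
  refine ⟨deleteEdges_le _, hT.2.anti (deleteEdges_le _), Nat.card_eq_two_iff.mpr
    ⟨_, _, fun h => hT.not_reachable_deleteEdges hab (ConnectedComponent.exact h),
      Set.eq_univ_of_forall fun c => ?_⟩⟩
  induction c using ConnectedComponent.ind with
  | h w =>
    rcases reachable_deleteEdges_or hT.1 hab w with h | h <;>
      simp [ConnectedComponent.eq, h]

lemma eq_deleteEdges_of_isTwoForest (hT : T.IsTree) (hH : IsTwoForest T H) {a b : V}
    (hab : T.Adj a b) (hnab : ¬ H.Reachable a b) : T.deleteEdges {s(a, b)} = H := by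
  -- An edge `cd ≠ ab` of `T` missing from `H` would not be a bridge: `T - cd` contains `H`
  -- together with `ab`, which joins the two components of `H`.
  have hmem : ∀ {c d}, T.Adj c d → s(c, d) ≠ s(a, b) → H.Adj c d := by
    intro c d hcd hne
    by_contra hncd
    have hle : H ≤ T.deleteEdges {s(c, d)} := fun x y hxy => by
      refine (deleteEdges_adj ..).mpr ⟨hH.1 hxy, fun he => hncd ?_⟩
      rw [← mem_edgeSet, ← Set.mem_singleton_iff.mp he]
      exact hxy
    have hab' : (T.deleteEdges {s(c, d)}).Adj a b := (deleteEdges_adj ..).mpr ⟨hab, Ne.symm hne⟩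
    refine hT.not_reachable_deleteEdges hcd ?_
    by_cases hr : H.Reachable c d
    · exact hr.mono hle
    · rcases reachable_and_reachable_or_of_card_eq_two hH.2.2 hnab hr with
        ⟨hca, hdb⟩ | ⟨hcb, hda⟩
      · exact (hca.mono hle).trans (hab'.reachable.trans (hdb.mono hle).symm)
      · exact (hcb.mono hle).trans (hab'.reachable.symm.trans (hda.mono hle).symm)
  ext c d
  rw [deleteEdges_adj, Set.mem_singleton_iff]
  refine ⟨fun ⟨hcd, hne⟩ => hmem hcd hne, fun h => ⟨hH.1 h, fun he => hnab ?_⟩⟩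
  rcases Sym2.eq_iff.mp he with ⟨rfl, rfl⟩ | ⟨rfl, rfl⟩
  exacts [h.reachable, h.reachable.symm]

lemma isTwoForest_iff_of_isTree (hT : T.IsTree) :
    IsTwoForest T H ↔ ∃ e ∈ T.edgeSet, T.deleteEdges {e} = H := by
  refine ⟨fun hH => ?_, ?_⟩
  · obtain ⟨c₁, c₂, hne, -⟩ := Nat.card_eq_two_iff.mp hH.2.2
    induction c₁ using ConnectedComponent.ind with | h x =>
    induction c₂ using ConnectedComponent.ind with | h y =>
    obtain ⟨a, b, hab, hnab⟩ := exists_adj_not_reachable_of_not_reachable hT.1.preconnected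
      fun h => hne (ConnectedComponent.sound h)
    exact ⟨s(a, b), hab, eq_deleteEdges_of_isTwoForest hT hH hab hnab⟩
  · rintro ⟨e, he, rfl⟩
    induction e with | h a b => exact isTwoForest_deleteEdges hT he

variable [Fintype V]

lemma dQd_eq_sum_edgeFinset (hT : T.IsTree) (v : V) :
    dQd T v = ∑ e ∈ T.edgeFinset, (farDegSum T (T.deleteEdges {e}) v : ℚ) ^ 2 := by
  have hF : ({H | IsTwoForest T H} : Finset _) = T.edgeFinset.image (T.deleteEdges {·}) := by
    ext H
    simp [isTwoForest_iff_of_isTree hT]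
  rw [dQd_eq_sum_sq_farDegSum, hF, sum_image]
  simpa using T.deleteEdges_singleton_injOn

lemma deg_pos {G : SimpleGraph V} {x : V} (h : (G.neighborSet x).Nonempty) : 0 < deg G x :=
  have := h.to_subtype
  Nat.card_pos

lemma farDegSum_deleteEdges_pos (hT : T.IsTree) {e : Sym2 V} (he : e ∈ T.edgeSet) (v : V) :
    0 < farDegSum T (T.deleteEdges {e}) v := by
  induction e with | h a b =>
  obtain ⟨x, y, hxy, hxv⟩ : ∃ x y, T.Adj x y ∧ ¬ (T.deleteEdges {s(a, b)}).Reachable x v := by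
    by_cases hav : (T.deleteEdges {s(a, b)}).Reachable a v
    · exact ⟨b, a, (mem_edgeSet _).mp he |>.symm,
        fun hbv => hT.not_reachable_deleteEdges he (hav.trans hbv.symm)⟩
    · exact ⟨a, b, he, hav⟩
  exact (deg_pos ⟨y, hxy⟩).trans_le
    (single_le_sum (fun _ _ => Nat.zero_le _) (mem_farSide.mpr hxv))

lemma exists_two_le_farDegSum_of_not_adj (hT : T.IsTree) {v w : V} (hwv : w ≠ v)
    (hvw : ¬ T.Adj v w) : ∃ e ∈ T.edgeSet, 2 ≤ farDegSum T (T.deleteEdges {e}) v := by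
  obtain ⟨p, hp⟩ := hT.1.exists_isPath v w
  cases p with
  | nil => exact absurd rfl hwv
  | @cons _ u _ hvu r =>
    rw [Walk.cons_isPath_iff] at hp
    have huv := hT.not_reachable_deleteEdges hvu
    have huw : (T.deleteEdges {s(v, u)}).Reachable u w :=
      reachable_deleteEdges_iff_exists_walk.mpr
        ⟨r, fun h => hp.2 (r.fst_mem_support_of_mem_edges h)⟩
    have hu := deg_pos (G := T) ⟨v, hvu.symm⟩
    have hw := deg_pos ((hT.1.preconnected w v).nonempty_neighborSet_left hwv)
    refine ⟨s(v, u), hvu, ?_⟩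
    calc 2 ≤ deg T u + deg T w := by omega
      _ = ∑ i ∈ {u, w}, deg T i := (sum_pair fun h : u = w => hvw (h ▸ hvu)).symm
      _ ≤ farDegSum T (T.deleteEdges {s(v, u)}) v := by
        refine sum_le_sum_of_subset fun i hi => mem_farSide.mpr ?_
        rcases mem_insert.mp hi with rfl | hi
        · exact fun h => huv h.symm
        · rw [mem_singleton.mp hi]
          exact fun h => huv (huw.trans h).symm

lemma farDegSum_deleteEdges_eq_one (hT : T.IsTree) {v : V} (hstar : ∀ w, w ≠ v → T.Adj v w)
    {e : Sym2 V} (he : e ∈ T.edgeSet) : farDegSum T (T.deleteEdges {e}) v = 1 := by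
  have hfar : ∀ i, ¬ (T.deleteEdges {e}).Reachable i v → i ≠ v ∧ s(v, i) = e := by
    intro i hi
    have hiv : i ≠ v := by
      rintro rfl
      exact hi .rfl
    exact ⟨hiv, by_contra fun hne => hi (deleteEdges_adj.mpr ⟨hstar i hiv, hne⟩).reachable.symm⟩
  obtain ⟨w, hw⟩ := nonempty_of_sum_ne_zero (farDegSum_deleteEdges_pos hT he v).ne'
  rw [mem_farSide] at hw
  obtain ⟨hwv, rfl⟩ := hfar w hw
  have hF : farSide (T.deleteEdges {s(v, w)}) v = {w} :=
    eq_singleton_iff_unique_mem.mpr ⟨mem_farSide.mpr hw,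
      fun i hi => Sym2.congr_right.mp (hfar i (mem_farSide.mp hi)).2⟩
  have hnbr : T.neighborSet w = {v} := by
    ext x
    simp only [mem_neighborSet, Set.mem_singleton_iff]
    refine ⟨fun hx => by_contra fun hxv => ?_, fun h => h ▸ (hstar w hwv).symm⟩
    exact hT.2.not_adj_of_adj_of_adj (hstar x hxv) (hstar w hwv) hx.symm
  rw [farDegSum, hF, sum_singleton, deg, hnbr, Nat.card_unique]

end Tree

theorem stmt_16_general {V : Type*} [Fintype V] (T : SimpleGraph V) (hT : T.IsTree)
    (v : V) :
    ((Fintype.card V : ℚ) - 1 ≤ dQd T v) ∧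
    (dQd T v = (Fintype.card V : ℚ) - 1 ↔ ∀ w, w ≠ v → T.Adj v w) := by
  classical
  have hn : (Fintype.card V : ℚ) - 1 = ∑ _e ∈ T.edgeFinset, (1 : ℚ) := by
    rw [Finset.sum_const, nsmul_one, ← hT.card_edgeFinset]
    push_cast
    ring
  have hone : ∀ e ∈ T.edgeFinset, (1 : ℚ) ≤ (farDegSum T (T.deleteEdges {e}) v : ℚ) ^ 2 :=
    fun e he => one_le_pow₀ <| by
      exact_mod_cast farDegSum_deleteEdges_pos hT (mem_edgeFinset.mp he) v
  rw [dQd_eq_sum_edgeFinset hT, hn]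
  refine ⟨Finset.sum_le_sum hone, ?_⟩
  rw [eq_comm, Finset.sum_eq_sum_iff_of_le hone]
  refine ⟨fun h w hwv => by_contra fun hvw => ?_, fun hstar e he => ?_⟩
  · obtain ⟨e, he, h2⟩ := exists_two_le_farDegSum_of_not_adj hT hwv hvw
    have h2' : (2 : ℚ) ≤ farDegSum T (T.deleteEdges {e}) v := by exact_mod_cast h2
    nlinarith [h e (mem_edgeFinset.mpr he)]
  · rw [farDegSum_deleteEdges_eq_one hT hstar (mem_edgeFinset.mp he)]
    norm_num

/-- `d_T^T Q_{T,v} d_T ≥ n − 1` with equality iff `v` is adjacent to every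
other vertex. -/
theorem stmt_16 {V : Type*} [Fintype V] (T : SimpleGraph V) (hT : T.IsTree)
    (hV : 2 ≤ Fintype.card V) (v : V) :
    ((Fintype.card V : ℚ) - 1 ≤ dQd T v) ∧
    (dQd T v = (Fintype.card V : ℚ) - 1 ↔ ∀ w, w ≠ v → T.Adj v w) :=
  stmt_16_general T hT v

end Braess
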